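/- arXiv:1506.05151 — 14 statements merged into one kernel-verified Lean document; each statement's English description precedes it below -/
import Mathlib

section
/- Let ⁰a = (a₀; a₁, a₂), ⁰b = (b₀; b₁, b₂), ⁰c = (c₀; c₁, c₂) be scators with a₀ ≠ 0, b₀ ≠ 0, c₀ ≠ 0 and a₀ + b₀ ≠ 0. Then (⁰a + ⁰b)⁰c − ⁰a⁰c − ⁰b⁰c = ((b₀a₁ − a₀b₁)(a₀b₂ − b₀a₂)/(a₀b₀(a₀ + b₀))) · (c₁c₂/c₀; c₂, c₁), where addition of scators and multiplication of a scator by a real number are componentwise. In particular, the scator product is not distributive over addition in general. -/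
/-- A (1+2)-dimensional scator: scalar component `s` and director components `x`, `y`. -/
structure Scator where
  s : ℝ
  x : ℝ
  y : ℝ

namespace Scator

/-- Componentwise addition of scators. -/
noncomputable def add (a b : Scator) : Scator := ⟨a.s + b.s, a.x + b.x, a.y + b.y⟩

/-- Componentwise subtraction of scators. -/
noncomputable def sub (a b : Scator) : Scator := ⟨a.s - b.s, a.x - b.x, a.y - b.y⟩

/-- Componentwise multiplication of a scator by a real scalar. -/
noncomputable def smul (l : ℝ) (a : Scator) : Scator := ⟨l * a.s, l * a.x, l * a.y⟩

/-- The scator product. -/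
noncomputable def mul (a b : Scator) : Scator :=
  ⟨a.s * b.s + a.x * b.x + a.y * b.y + a.x * a.y * b.x * b.y / (a.s * b.s),
   a.s * b.x + a.x * b.s + a.x * a.y * b.y / a.s + a.y * b.x * b.y / b.s,
   a.s * b.y + a.y * b.s + a.x * a.y * b.x / a.s + a.x * b.x * b.y / b.s⟩

/-- Hypercomplex conjugate. -/
noncomputable def conj (a : Scator) : Scator := ⟨a.s, -a.x, -a.y⟩

/-- Ordinary dual scator. -/
noncomputable def bar (a : Scator) : Scator := ⟨a.x * a.y / a.s, a.y, a.x⟩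

/-- Internal dual scator. -/
noncomputable def barI (a : Scator) : Scator := ⟨a.x, a.s, a.x * a.y / a.s⟩

/-- External dual scator. -/
noncomputable def barE (a : Scator) : Scator := ⟨a.y, a.x * a.y / a.s, a.s⟩

/-- Modulus squared of a scator. -/
noncomputable def norm2 (a : Scator) : ℝ := a.s ^ 2 - a.x ^ 2 - a.y ^ 2 + a.x ^ 2 * a.y ^ 2 / a.s ^ 2

/-- Inverse of a scator with respect to the scator product. -/
noncomputable def inv (a : Scator) : Scator := smul (1 / norm2 a) (conj a)

end Scator

theorem scator_nondistributivity (a b c : Scator)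
    (ha : a.s ≠ 0) (hb : b.s ≠ 0) (hc : c.s ≠ 0) (hab : a.s + b.s ≠ 0) :
    Scator.sub (Scator.sub (Scator.mul (Scator.add a b) c) (Scator.mul a c)) (Scator.mul b c) =
      Scator.smul ((b.s * a.x - a.s * b.x) * (a.s * b.y - b.s * a.y) /
          (a.s * b.s * (a.s + b.s)))
        ⟨c.x * c.y / c.s, c.y, c.x⟩ ∧
    ∃ a' b' c' : Scator, a'.s ≠ 0 ∧ b'.s ≠ 0 ∧ c'.s ≠ 0 ∧ a'.s + b'.s ≠ 0 ∧
      Scator.mul (Scator.add a' b') c' ≠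
        Scator.add (Scator.mul a' c') (Scator.mul b' c') := by
  constructor
  · simp only [Scator.sub, Scator.add, Scator.mul, Scator.smul, Scator.mk.injEq]
    refine ⟨?_, ?_, ?_⟩ <;> field_simp <;> ring
  · refine ⟨⟨1,1,0⟩, ⟨1,0,1⟩, ⟨1,1,1⟩, one_ne_zero, one_ne_zero, one_ne_zero, by norm_num, ?_⟩
    simp only [Scator.add, Scator.mul, ne_eq, Scator.mk.injEq]
    norm_num
end

section
/- Let ⁰a = (a₀; a₁, a₂) and ⁰b = (b₀; b₁, b₂) be scators with a₀ ≠ 0 and b₀ ≠ 0. Then hypercomplex conjugation is a multiplicative homomorphism for the scator product: (⁰a⁰b)* = (⁰a*)(⁰b*). -/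
theorem conj_mul_hom (a b : Scator) (ha : a.s ≠ 0) (hb : b.s ≠ 0) :
    Scator.conj (Scator.mul a b) = Scator.mul (Scator.conj a) (Scator.conj b) := by
  simp only [Scator.mul, Scator.conj]
  refine Scator.mk.injEq .. ▸ ⟨by ring, by ring, by ring⟩
end

section
/- Let ⁰a = (a₀; a₁, a₂) and ⁰b = (b₀; b₁, b₂) be scators with all six components a₀, a₁, a₂, b₀, b₁, b₂ nonzero. Then the ordinary duality operation preserves the scator product: (bar ⁰a)(bar ⁰b) = ⁰a⁰b. -/
theorem bar_preserves_product (a b : Scator)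
    (ha0 : a.s ≠ 0) (ha1 : a.x ≠ 0) (ha2 : a.y ≠ 0)
    (hb0 : b.s ≠ 0) (hb1 : b.x ≠ 0) (hb2 : b.y ≠ 0) :
    Scator.mul (Scator.bar a) (Scator.bar b) = Scator.mul a b := by
  simp only [Scator.mul, Scator.bar]
  refine Scator.mk.injEq .. ▸ ⟨?_, ?_, ?_⟩ <;> field_simp <;> ring
end

section
/- Let ⁰a = (a₀; a₁, a₂) be a scator with a₀ ≠ 0, a₁ ≠ 0, a₂ ≠ 0. Then the ordinary duality operation is an isometry: ‖bar ⁰a‖² = ‖⁰a‖², i.e. (a₁a₂/a₀)² − a₂² − a₁² + a₂²a₁²/(a₁a₂/a₀)² = a₀² − a₁² − a₂² + a₁²a₂²/a₀². -/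
theorem bar_isometry (a : Scator) (h0 : a.s ≠ 0) (h1 : a.x ≠ 0) (h2 : a.y ≠ 0) :
    Scator.norm2 (Scator.bar a) = Scator.norm2 a := by
  simp only [Scator.norm2, Scator.bar]
  field_simp
  ring
end

section
/- Let ⁰a = (a₀; a₁, a₂) be a scator with a₀ ≠ 0. Then the internal and external duality operations anti-commute with hypercomplex conjugation: (bar ⁰aᵢ)* + bar(⁰a*)ᵢ = 0 and (bar ⁰aₑ)* + bar(⁰a*)ₑ = 0, where 0 denotes the zero scator (0; 0, 0). -/
namespace Scator

theorem add_smul_neg_one_self (b : Scator) : add b (smul (-1) b) = ⟨0, 0, 0⟩ := by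
  simp only [add, smul, mk.injEq]
  refine ⟨by ring, by ring, by ring⟩

theorem barI_conj (a : Scator) : barI (conj a) = smul (-1) (conj (barI a)) := by
  simp only [barI, conj, smul, mk.injEq]
  refine ⟨by ring, by ring, by ring⟩

theorem barE_conj (a : Scator) : barE (conj a) = smul (-1) (conj (barE a)) := by
  simp only [barE, conj, smul, mk.injEq]
  refine ⟨by ring, by ring, by ring⟩

end Scator

theorem internal_external_anticommute_conj_general (a : Scator) :
    Scator.add (Scator.conj (Scator.barI a)) (Scator.barI (Scator.conj a)) =
      (⟨0, 0, 0⟩ : Scator) ∧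
    Scator.add (Scator.conj (Scator.barE a)) (Scator.barE (Scator.conj a)) =
      (⟨0, 0, 0⟩ : Scator) := by
  rw [Scator.barI_conj, Scator.barE_conj]
  exact ⟨Scator.add_smul_neg_one_self _, Scator.add_smul_neg_one_self _⟩

theorem internal_external_anticommute_conj (a : Scator) (ha : a.s ≠ 0) :
    Scator.add (Scator.conj (Scator.barI a)) (Scator.barI (Scator.conj a)) =
      (⟨0, 0, 0⟩ : Scator) ∧
    Scator.add (Scator.conj (Scator.barE a)) (Scator.barE (Scator.conj a)) =
      (⟨0, 0, 0⟩ : Scator) :=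
  internal_external_anticommute_conj_general a
end

section
/- Let ⁰a = (a₀; a₁, a₂) and ⁰b = (b₀; b₁, b₂) be scators with all six components a₀, a₁, a₂, b₀, b₁, b₂ nonzero. Then both the internal and the external duality operations preserve the scator product: (bar ⁰aᵢ)(bar ⁰bᵢ) = ⁰a⁰b and (bar ⁰aₑ)(bar ⁰bₑ) = ⁰a⁰b. -/
theorem internal_external_preserve_product (a b : Scator)
    (ha0 : a.s ≠ 0) (ha1 : a.x ≠ 0) (ha2 : a.y ≠ 0)
    (hb0 : b.s ≠ 0) (hb1 : b.x ≠ 0) (hb2 : b.y ≠ 0) :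
    Scator.mul (Scator.barI a) (Scator.barI b) = Scator.mul a b ∧
    Scator.mul (Scator.barE a) (Scator.barE b) = Scator.mul a b := by
  constructor <;> simp only [Scator.mul, Scator.barI, Scator.barE, Scator.mk.injEq] <;>
    refine ⟨?_, ?_, ?_⟩ <;> field_simp <;> ring
end

section
/- Let ⁰a = (a₀; a₁, a₂) be a scator with a₀ ≠ 0 and a₁ ≠ 0. Then the internal duality operation reverses the sign of the modulus squared: ‖bar ⁰aᵢ‖² = −‖⁰a‖², i.e. a₁² − a₀² − (a₁a₂/a₀)² + a₀²(a₁a₂/a₀)²/a₁² = −(a₀² − a₁² − a₂² + a₁²a₂²/a₀²). Consequently the internal duality is a causality swap: it exchanges scators of positive modulus squared with scators of negative modulus squared and sends light-like scators (modulus squared zero) to light-like scators. -/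
theorem internal_dual_causality_swap (a : Scator) (h0 : a.s ≠ 0) (h1 : a.x ≠ 0) :
    Scator.norm2 (Scator.barI a) = -Scator.norm2 a ∧
    (0 < Scator.norm2 a → Scator.norm2 (Scator.barI a) < 0) ∧
    (Scator.norm2 a < 0 → 0 < Scator.norm2 (Scator.barI a)) ∧
    (Scator.norm2 a = 0 → Scator.norm2 (Scator.barI a) = 0) := by
  have key : Scator.norm2 (Scator.barI a) = -Scator.norm2 a := by
    simp only [Scator.norm2, Scator.barI]
    field_simp
    ring
  refine ⟨key, ?_, ?_, ?_⟩ <;> intro h <;> rw [key] <;> linarith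
end

section
/- Let ⁰a = (a₀; a₁, a₂) be a scator with a₀ ≠ 0 and a₂ ≠ 0. Then the external duality operation reverses the sign of the modulus squared: ‖bar ⁰aₑ‖² = −‖⁰a‖², i.e. a₂² − (a₁a₂/a₀)² − a₀² + (a₁a₂/a₀)²a₀²/a₂² = −(a₀² − a₁² − a₂² + a₁²a₂²/a₀²). Consequently the external duality is a causality swap: it exchanges scators of positive modulus squared with scators of negative modulus squared and sends light-like scators (modulus squared zero) to light-like scators. -/
theorem external_dual_causality_swap (a : Scator) (h0 : a.s ≠ 0) (h2 : a.y ≠ 0) :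
    Scator.norm2 (Scator.barE a) = -Scator.norm2 a ∧
    (0 < Scator.norm2 a → Scator.norm2 (Scator.barE a) < 0) ∧
    (Scator.norm2 a < 0 → 0 < Scator.norm2 (Scator.barE a)) ∧
    (Scator.norm2 a = 0 → Scator.norm2 (Scator.barE a) = 0) := by
  have key : Scator.norm2 (Scator.barE a) = -Scator.norm2 a := by
    simp only [Scator.norm2, Scator.barE]
    field_simp
    ring
  exact ⟨key, fun h => by rw [key]; linarith, fun h => by rw [key]; linarith,
    fun h => by rw [key, h, neg_zero]⟩
end

section
/- Let ⁰a = (a₀; a₁, a₂) and ⁰b = (b₀; b₁, b₂) be scators with a₀ ≠ 0 and b₀ ≠ 0. Then (⁰a*)⁰b + ⁰a(⁰b*) = (2(a₀b₀ − a₁b₁ − a₂b₂ + a₁a₂b₁b₂/(a₀b₀)); 0, 0), i.e. this sum is a real scator with vanishing director components. -/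
theorem conj_mul_sum_real (a b : Scator) (ha : a.s ≠ 0) (hb : b.s ≠ 0) :
    Scator.add (Scator.mul (Scator.conj a) b) (Scator.mul a (Scator.conj b)) =
      ⟨2 * (a.s * b.s - a.x * b.x - a.y * b.y + a.x * a.y * b.x * b.y / (a.s * b.s)), 0, 0⟩ := by
  simp only [Scator.add, Scator.mul, Scator.conj]
  rw [Scator.mk.injEq]
  refine ⟨by ring, by field_simp; ring, by field_simp; ring⟩
end

section
/- Let ⁰a = (a₀; a₁, a₂) and ⁰b = (b₀; b₁, b₂) be scators with a₀ ≠ 0 and b₀ ≠ 0, and let ⋆ denote the product in the algebra A. Then the four components u₀, u₁, u₂, u₃ of F(⁰a) ⋆ F(⁰b) satisfy u₀u₃ = u₁u₂. Moreover, whenever the scalar component a₀b₀ + a₁b₁ + a₂b₂ + a₁a₂b₁b₂/(a₀b₀) = a₀b₀(1 + a₁b₁/(a₀b₀))(1 + a₂b₂/(a₀b₀)) of ⁰a⁰b is nonzero, the fundamental embedding F is multiplicative from the scator product to the product of A: F(⁰a) ⋆ F(⁰b) = F(⁰a⁰b). -/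
/-- The algebra `A = ℝ⁴` with basis `{1, i₁, i₂, i₁₂}`. -/
structure A4 where
  c0 : ℝ
  c1 : ℝ
  c2 : ℝ
  c3 : ℝ

namespace A4

/-- Componentwise addition in `A`. -/
noncomputable def add (u v : A4) : A4 := ⟨u.c0 + v.c0, u.c1 + v.c1, u.c2 + v.c2, u.c3 + v.c3⟩

/-- Componentwise subtraction in `A`. -/
noncomputable def sub (u v : A4) : A4 := ⟨u.c0 - v.c0, u.c1 - v.c1, u.c2 - v.c2, u.c3 - v.c3⟩

/-- Scalar multiplication in `A`. -/
noncomputable def smul (l : ℝ) (u : A4) : A4 := ⟨l * u.c0, l * u.c1, l * u.c2, l * u.c3⟩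

/-- The product `⋆` of the algebra `A`, determined by `1² = i₁² = i₂² = i₁₂² = 1`,
`i₁i₂ = i₂i₁ = i₁₂`, `i₁i₁₂ = i₁₂i₁ = i₂`, `i₂i₁₂ = i₁₂i₂ = i₁`. -/
noncomputable def star (u v : A4) : A4 :=
  ⟨u.c0 * v.c0 + u.c1 * v.c1 + u.c2 * v.c2 + u.c3 * v.c3,
   u.c0 * v.c1 + u.c1 * v.c0 + u.c2 * v.c3 + u.c3 * v.c2,
   u.c0 * v.c2 + u.c2 * v.c0 + u.c1 * v.c3 + u.c3 * v.c1,
   u.c0 * v.c3 + u.c3 * v.c0 + u.c1 * v.c2 + u.c2 * v.c1⟩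

end A4

/-- The fundamental embedding of scators with nonzero scalar component into `A`. -/
noncomputable def F (a : Scator) : A4 := ⟨a.s, a.x, a.y, a.x * a.y / a.s⟩

theorem fundamental_embedding_multiplicative (a b : Scator) (ha : a.s ≠ 0) (hb : b.s ≠ 0) :
    ((Scator.mul a b).s ≠ 0 → A4.star (F a) (F b) = F (Scator.mul a b)) ∧
    (A4.star (F a) (F b)).c0 * (A4.star (F a) (F b)).c3 =
      (A4.star (F a) (F b)).c1 * (A4.star (F a) (F b)).c2 := by
  constructor
  · intro hs
    simp only [Scator.mul] at hs ⊢
    simp only [A4.star, F]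
    refine A4.mk.injEq .. ▸ ⟨?_, ?_, ?_, ?_⟩
    · field_simp
    · field_simp; ring
    · field_simp; ring
    · rw [eq_div_iff hs]; field_simp; ring
  · simp only [A4.star, F]
    field_simp
    ring
end

section
/- Let ⁰a = (a₀; a₁, a₂), ⁰b = (b₀; b₁, b₂), ⁰c = (c₀; c₁, c₂) be scators with a₀ ≠ 0, b₀ ≠ 0, c₀ ≠ 0 and a₀ + b₀ ≠ 0. Then F(⁰a + ⁰b) ⋆ F(⁰c) − F(⁰a) ⋆ F(⁰c) − F(⁰b) ⋆ F(⁰c) = κ(⁰a, ⁰b) · (c₁c₂/c₀, c₂, c₁, c₀), where κ(⁰a, ⁰b) = (a₁+b₁)(a₂+b₂)/(a₀+b₀) − a₁a₂/a₀ − b₁b₂/b₀, addition of scators is componentwise, and the right-hand side is the scalar multiple by κ(⁰a, ⁰b) of the element (c₁c₂/c₀, c₂, c₁, c₀) = i₁₂ ⋆ F(⁰c) of A. -/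
theorem embedded_nondistributivity (a b c : Scator)
    (ha : a.s ≠ 0) (hb : b.s ≠ 0) (hc : c.s ≠ 0) (hab : a.s + b.s ≠ 0) :
    A4.sub (A4.sub (A4.star (F (Scator.add a b)) (F c)) (A4.star (F a) (F c)))
        (A4.star (F b) (F c)) =
      A4.smul ((a.x + b.x) * (a.y + b.y) / (a.s + b.s) - a.x * a.y / a.s - b.x * b.y / b.s)
        ⟨c.x * c.y / c.s, c.y, c.x, c.s⟩ ∧
    (⟨c.x * c.y / c.s, c.y, c.x, c.s⟩ : A4) = A4.star ⟨0, 0, 0, 1⟩ (F c) := by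
  constructor
  · simp only [A4.sub, A4.star, A4.smul, F, Scator.add, A4.mk.injEq]
    refine ⟨?_, ?_, ?_, ?_⟩ <;> field_simp <;> ring
  · simp only [A4.star, F, A4.mk.injEq]
    refine ⟨?_, ?_, ?_, ?_⟩ <;> ring
end

section
/- Let ⁰a = (a₀; a₁, a₂) be a scator with a₀ ≠ 0, a₁ ≠ 0, a₂ ≠ 0 and ‖⁰a‖² ≠ 0. Then the dual of ⁰a multiplied (in the scator product) by the inverse of ⁰a is the zero scator: (bar ⁰a)(⁰a)⁻¹ = (0; 0, 0), where (⁰a)⁻¹ = (1/‖⁰a‖²) · ⁰a*. In particular the scator algebra has zero divisors. -/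
namespace Scator

theorem mul_smul_right (a b : Scator) (l : ℝ) : mul a (smul l b) = smul l (mul a b) := by
  rcases eq_or_ne l 0 with rfl | hl
  · simp [mul, smul]
  · simp only [mul, smul, mk.injEq]
    refine ⟨?_, ?_, ?_⟩ <;> field_simp

theorem smul_zero (l : ℝ) : smul l ⟨0, 0, 0⟩ = ⟨0, 0, 0⟩ := by
  simp [smul]

theorem bar_mul_conj {a : Scator} (hs : a.s ≠ 0) (hx : a.x ≠ 0) (hy : a.y ≠ 0) :
    mul (bar a) (conj a) = ⟨0, 0, 0⟩ := by
  simp only [mul, bar, conj, mk.injEq]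
  refine ⟨?_, ?_, ?_⟩ <;> field_simp <;> ring

end Scator

theorem bar_mul_inv_zero (a : Scator) (h0 : a.s ≠ 0) (h1 : a.x ≠ 0) (h2 : a.y ≠ 0)
    (hn : Scator.norm2 a ≠ 0) :
    Scator.mul (Scator.bar a) (Scator.inv a) = (⟨0, 0, 0⟩ : Scator) ∧
    Scator.bar a ≠ (⟨0, 0, 0⟩ : Scator) ∧ Scator.inv a ≠ (⟨0, 0, 0⟩ : Scator) := by
  refine ⟨?_, fun h => h2 (congrArg Scator.x h), fun h => ?_⟩
  · rw [Scator.inv, Scator.mul_smul_right, Scator.bar_mul_conj h0 h1 h2, Scator.smul_zero]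
  · exact mul_ne_zero (one_div_ne_zero hn) h0 (congrArg Scator.s h)
end

section
/- Let ⁰a = (a₀; a₁, a₂) be a scator with a₀ ≠ 0, a₁ ≠ 0, a₂ ≠ 0 and ‖⁰a‖² ≠ 0. Then each duality operation commutes with scator inversion: bar((⁰a)⁻¹) = (bar ⁰a)⁻¹, bar((⁰a)⁻¹)ᵢ = (bar ⁰aᵢ)⁻¹, and bar((⁰a)⁻¹)ₑ = (bar ⁰aₑ)⁻¹, where the inverse of any scator ⁰c with nonzero modulus squared is (⁰c)⁻¹ = (1/‖⁰c‖²) · ⁰c*. -/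
/-! Each duality is homogeneous, sends the conjugate to `±1` times the conjugate of the dual, and
multiplies the modulus squared by the same sign `±1`. Since the inverse is the conjugate scaled by
`1 / ‖a‖²` and `1 / (±‖a‖²) = ±1 / ‖a‖²`, the signs cancel. -/

namespace Scator

theorem smul_smul (l m : ℝ) (a : Scator) : smul l (smul m a) = smul (l * m) a := by
  simp only [smul, mul_assoc]

theorem one_smul (a : Scator) : smul 1 a = a := by
  simp only [smul, one_mul]

theorem map_inv_eq_inv_map {D : Scator → Scator} {c : ℝ} (a : Scator) (hc : c * c = 1)
    (hsmul : ∀ l b, D (smul l b) = smul l (D b)) (hconj : D (conj a) = smul c (conj (D a)))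
    (hnorm2 : norm2 (D a) = c * norm2 a) : D (inv a) = inv (D a) := by
  have hc_inv : c⁻¹ = c := inv_eq_of_mul_eq_one_right hc
  rw [inv, inv, hsmul, hconj, smul_smul, hnorm2, one_div, one_div, mul_inv, hc_inv,
    mul_comm]

theorem bar_smul (l : ℝ) (a : Scator) : bar (smul l a) = smul l (bar a) := by
  rcases eq_or_ne l 0 with rfl | hl
  · simp [bar, smul]
  · simp only [bar, smul, mk.injEq, and_true]
    field_simp

theorem barI_smul (l : ℝ) (a : Scator) : barI (smul l a) = smul l (barI a) := by
  rcases eq_or_ne l 0 with rfl | hl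
  · simp [barI, smul]
  · simp only [barI, smul, mk.injEq, true_and]
    field_simp

theorem barE_smul (l : ℝ) (a : Scator) : barE (smul l a) = smul l (barE a) := by
  rcases eq_or_ne l 0 with rfl | hl
  · simp [barE, smul]
  · simp only [barE, smul, mk.injEq, true_and, and_true]
    field_simp

theorem bar_conj (a : Scator) : bar (conj a) = conj (bar a) := by
  simp [bar, conj]

theorem norm2_bar {a : Scator} (h0 : a.s ≠ 0) (h1 : a.x ≠ 0) (h2 : a.y ≠ 0) :
    norm2 (bar a) = norm2 a := by
  simp only [norm2, bar]
  field_simp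
  ring

theorem norm2_barI {a : Scator} (h0 : a.s ≠ 0) (h1 : a.x ≠ 0) :
    norm2 (barI a) = -1 * norm2 a := by
  simp only [norm2, barI]
  field_simp
  ring

theorem norm2_barE {a : Scator} (h0 : a.s ≠ 0) (h2 : a.y ≠ 0) :
    norm2 (barE a) = -1 * norm2 a := by
  simp only [norm2, barE]
  field_simp
  ring

end Scator

theorem dualities_commute_with_inversion_general (a : Scator)
    (h0 : a.s ≠ 0) (h1 : a.x ≠ 0) (h2 : a.y ≠ 0) :
    Scator.bar (Scator.inv a) = Scator.inv (Scator.bar a) ∧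
    Scator.barI (Scator.inv a) = Scator.inv (Scator.barI a) ∧
    Scator.barE (Scator.inv a) = Scator.inv (Scator.barE a) :=
  ⟨Scator.map_inv_eq_inv_map a (one_mul 1) Scator.bar_smul
      (by rw [Scator.one_smul]; exact Scator.bar_conj a)
      (by rw [one_mul]; exact Scator.norm2_bar h0 h1 h2),
    Scator.map_inv_eq_inv_map a (by norm_num) Scator.barI_smul (Scator.barI_conj a)
      (Scator.norm2_barI h0 h1),
    Scator.map_inv_eq_inv_map a (by norm_num) Scator.barE_smul (Scator.barE_conj a)
      (Scator.norm2_barE h0 h2)⟩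

theorem dualities_commute_with_inversion (a : Scator)
    (h0 : a.s ≠ 0) (h1 : a.x ≠ 0) (h2 : a.y ≠ 0) (hn : Scator.norm2 a ≠ 0) :
    Scator.bar (Scator.inv a) = Scator.inv (Scator.bar a) ∧
    Scator.barI (Scator.inv a) = Scator.inv (Scator.barI a) ∧
    Scator.barE (Scator.inv a) = Scator.inv (Scator.barE a) :=
  dualities_commute_with_inversion_general a h0 h1 h2
end

section
/- Let ⁰a = (a₀; a₁, a₂) and ⁰b = (b₀; b₁, b₂) be scators with a₀ ≠ 0, b₀ ≠ 0, and suppose the scalar component of ⁰a⁰b is nonzero. Then the modulus squared is multiplicative: ‖⁰a⁰b‖² = ‖⁰a‖² ‖⁰b‖². Moreover, for any real λ ≠ 0, ‖λ · ⁰a‖² = λ² ‖⁰a‖². -/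
theorem norm2_multiplicative (a b : Scator) (ha : a.s ≠ 0) (hb : b.s ≠ 0)
    (hab : (Scator.mul a b).s ≠ 0) :
    Scator.norm2 (Scator.mul a b) = Scator.norm2 a * Scator.norm2 b ∧
    ∀ l : ℝ, l ≠ 0 → Scator.norm2 (Scator.smul l a) = l ^ 2 * Scator.norm2 a := by
  constructor
  · set P := a.s * b.s + a.x * b.x with hP
    set Q := a.s * b.s + a.y * b.y with hQ
    set R := a.s * b.x + a.x * b.s with hR
    set S := a.s * b.y + a.y * b.s with hS
    have hm0 : (Scator.mul a b).s = P * Q / (a.s * b.s) := by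
      show _ = _
      simp only [Scator.mul, hP, hQ]
      field_simp
      ring
    have hm1 : (Scator.mul a b).x = R * Q / (a.s * b.s) := by
      show _ = _
      simp only [Scator.mul, hR, hQ]
      field_simp
      ring
    have hm2 : (Scator.mul a b).y = S * P / (a.s * b.s) := by
      show _ = _
      simp only [Scator.mul, hS, hP]
      field_simp
      ring
    have hPQ : P * Q ≠ 0 := by
      intro h
      apply hab
      rw [hm0, h, zero_div]
    have hP0 : P ≠ 0 := left_ne_zero_of_mul hPQ
    have hQ0 : Q ≠ 0 := right_ne_zero_of_mul hPQ
    have key : Scator.norm2 (Scator.mul a b)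
        = (P^2 - R^2) * (Q^2 - S^2) / (a.s * b.s)^2 := by
      rw [Scator.norm2, hm0, hm1, hm2]
      field_simp
      ring
    rw [key, Scator.norm2, Scator.norm2]
    have e1 : P^2 - R^2 = (a.s^2 - a.x^2) * (b.s^2 - b.x^2) := by rw [hP, hR]; ring
    have e2 : Q^2 - S^2 = (a.s^2 - a.y^2) * (b.s^2 - b.y^2) := by rw [hQ, hS]; ring
    rw [e1, e2]
    field_simp
    ring
  · intro l hl
    simp only [Scator.norm2, Scator.smul]
    field_simp
end
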